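/- With the domains D ⊂ S^c setup of the non-regular pre-model example: let S = {z : -1 < Re z < 1}, let D = ∩_k D_k with D_k = ℂ \ {z : Re z = ±(1+1/k), Im z ≤ y_k}, and suppose α_k is a strictly decreasing sequence with k_D(i(α_k + 1/2), i(α_k - 1/2)) ≤ (1 + 1/(2k))·k_{D_k}(i(α_k + 1/2), i(α_k - 1/2)) for all k. Then, using that k_{D_k} ≤ k_{S_k} where S_k = {z : |Re z| < 1 + 1/k}, and k_{S_k}(i(α-1/2), i(α+1/2)) = π/(4(1+1/k)), k_S(same points) = π/4, one gets k_S(0, i(α_k + 1/2)) - k_D(0, i(α_k + 1/2)) ≥ (π/8)·∑_{j=1}^{k-1} 1/(1+j), hence limsup_{t→+∞} [k_S(0, -it) - k_D(0, -it)] = +∞. -/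

import Mathlib

open Filter

/-- The Poincaré (hyperbolic) distance of the unit disc, with density `1/(1-|z|²)`:
`ω(z,w) = arctanh |(z-w)/(1 - z̄ w)|`, where `arctanh x = ½ log((1+x)/(1-x))`. -/
noncomputable def poincare (z w : ℂ) : ℝ :=
  (1 / 2) * Real.log ((1 + ‖(z - w) / (1 - (starRingEnd ℂ) z * w)‖) /
    (1 - ‖(z - w) / (1 - (starRingEnd ℂ) z * w)‖))

/-- `Dslit y k` is the plane with the two vertical rays
`{Re z = ±(1 + 1/(k+1)), Im z ≤ y k}` removed (the domain `D_{k+1}` of the paper,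
reindexed from `0`). -/
def Dslit (y : ℕ → ℝ) (k : ℕ) : Set ℂ :=
  {z : ℂ | ¬ ((z.re = 1 + 1 / (k + 1 : ℝ) ∨ z.re = -(1 + 1 / (k + 1 : ℝ))) ∧ z.im ≤ y k)}

/-!
By the Schwarz–Pick lemma applied to `w ↦ (2r/π) i log((1+w)/(1-w))`, a map of the disc onto the
strip `|Re z| < r` carrying `tanh (π s/(4r))` to `i s`, every domain containing that strip has
`k(is, it) ≤ π/(4r) |s - t|`; composing instead with the (holomorphic) inverse of the Riemann map
of `S` gives `k_S(is, it) ≥ π/4 |s - t|`. On the unit segment below `i(α_k + 1/2)` the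
localization estimate and `D_k ⊇ S_k` give
`k_D ≤ (1 + 1/(2(k+1))) · π/(4(1 + 1/(k+1))) = π/4 - π/(8(k+2))`, so by the triangle inequality
`k_D(0, i(α_m + 1/2))` falls short of `π/4 |α_m + 1/2| ≤ k_S(0, i(α_m + 1/2))` by
`π/8 ∑_{j<m} 1/(j+2)`, which diverges.
-/

open Complex ComplexConjugate Metric Set Topology
open scoped Real

lemma Real.tanh_mem_Ioo (x : ℝ) : Real.tanh x ∈ Ioo (-1) 1 :=
  ⟨Real.neg_one_lt_tanh x, Real.tanh_lt_one x⟩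

lemma Real.tanh_eq_exp_two_mul (x : ℝ) :
    Real.tanh x = (Real.exp (2 * x) - 1) / (Real.exp (2 * x) + 1) := by
  rw [Real.tanh_eq, two_mul, Real.exp_add, Real.exp_neg]
  field_simp

lemma Real.one_add_tanh_div_one_sub_tanh (x : ℝ) :
    (1 + Real.tanh x) / (1 - Real.tanh x) = Real.exp (2 * x) := by
  rw [Real.tanh_eq_exp_two_mul]
  field_simp
  ring

lemma Real.tanh_le_tanh {u v : ℝ} (h : v ≤ u) : Real.tanh v ≤ Real.tanh u := by
  rwa [← Real.artanh_le_artanh_iff (Real.tanh_mem_Ioo v) (Real.tanh_mem_Ioo u), Real.artanh_tanh,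
    Real.artanh_tanh]

lemma Real.artanh_add_div {p q : ℝ} (hp : p ∈ Ioo (-1) 1) (hq : q ∈ Ioo (-1) 1) :
    Real.artanh ((p + q) / (1 + p * q)) = Real.artanh p + Real.artanh q := by
  obtain ⟨hp₁, hp₂⟩ := hp
  obtain ⟨hq₁, hq₂⟩ := hq
  have hpq : 0 < 1 + p * q := by nlinarith
  have hnum : 1 + (p + q) / (1 + p * q) = (1 + p) * (1 + q) / (1 + p * q) := by field_simp; ring
  have hden : 1 - (p + q) / (1 + p * q) = (1 - p) * (1 - q) / (1 + p * q) := by field_simp; ring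
  have hmem : (p + q) / (1 + p * q) ∈ Icc (-1) 1 := by
    constructor
    · rw [le_div_iff₀ hpq]; nlinarith
    · rw [div_le_iff₀ hpq]; nlinarith
  rw [Real.artanh_eq_half_log hmem, Real.artanh_eq_half_log ⟨hp₁.le, hp₂.le⟩,
    Real.artanh_eq_half_log ⟨hq₁.le, hq₂.le⟩, hnum, hden,
    show (1 + p) * (1 + q) / (1 + p * q) / ((1 - p) * (1 - q) / (1 + p * q)) =
      (1 + p) / (1 - p) * ((1 + q) / (1 - q)) by field_simp,
    Real.log_mul (div_pos (by linarith) (by linarith)).ne'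
      (div_pos (by linarith) (by linarith)).ne']
  ring

noncomputable def mobius (a z : ℂ) : ℂ := (a - z) / (1 - conj a * z)

section Mobius

variable {a z w : ℂ}

lemma one_sub_conj_mul_ne_zero (ha : ‖a‖ < 1) (hz : ‖z‖ < 1) : 1 - conj a * z ≠ 0 := by
  intro h
  have : ‖conj a * z‖ = 1 := by rw [← sub_eq_zero.mp h, norm_one]
  rw [norm_mul, RCLike.norm_conj] at this
  nlinarith [norm_nonneg a, norm_nonneg z]

lemma normSq_one_sub_conj_mul_sub_normSq_sub (a z : ℂ) :
    normSq (1 - conj a * z) - normSq (a - z) = (1 - normSq a) * (1 - normSq z) := by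
  simp only [normSq_apply, sub_re, sub_im, mul_re, mul_im, one_re, one_im, conj_re, conj_im]
  ring

lemma norm_mobius_sq (ha : ‖a‖ < 1) (hz : ‖z‖ < 1) :
    ‖mobius a z‖ ^ 2 = 1 - (1 - ‖a‖ ^ 2) * (1 - ‖z‖ ^ 2) / ‖1 - conj a * z‖ ^ 2 := by
  have hden : ‖1 - conj a * z‖ ^ 2 ≠ 0 := by simpa using one_sub_conj_mul_ne_zero ha hz
  rw [mobius, norm_div, div_pow, eq_sub_iff_add_eq, ← add_div, div_eq_one_iff_eq hden]
  simp only [Complex.sq_norm]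
  linarith [normSq_one_sub_conj_mul_sub_normSq_sub a z]

lemma norm_mobius_lt_one (ha : ‖a‖ < 1) (hz : ‖z‖ < 1) : ‖mobius a z‖ < 1 := by
  have hden : 0 < ‖1 - conj a * z‖ := norm_pos_iff.mpr (one_sub_conj_mul_ne_zero ha hz)
  have ha' : 0 < 1 - ‖a‖ ^ 2 := by nlinarith [norm_nonneg a]
  have hz' : 0 < 1 - ‖z‖ ^ 2 := by nlinarith [norm_nonneg z]
  have hfrac : 0 < (1 - ‖a‖ ^ 2) * (1 - ‖z‖ ^ 2) / ‖1 - conj a * z‖ ^ 2 := by positivity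
  nlinarith [norm_mobius_sq ha hz, norm_nonneg (mobius a z)]

/-- The pseudo-hyperbolic triangle inequality at the vertex `0`. -/
lemma norm_mobius_le (hz : ‖z‖ < 1) (hw : ‖w‖ < 1) :
    ‖mobius z w‖ ≤ (‖z‖ + ‖w‖) / (1 + ‖z‖ * ‖w‖) := by
  have hden : 0 < ‖1 - conj z * w‖ := norm_pos_iff.mpr (one_sub_conj_mul_ne_zero hz hw)
  have hden_le : ‖1 - conj z * w‖ ≤ 1 + ‖z‖ * ‖w‖ := by
    simpa [norm_mul] using norm_sub_le (1 : ℂ) (conj z * w)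
  have hz' : 0 ≤ 1 - ‖z‖ ^ 2 := by nlinarith [norm_nonneg z]
  have hw' : 0 ≤ 1 - ‖w‖ ^ 2 := by nlinarith [norm_nonneg w]
  have hsq : ‖mobius z w‖ ^ 2 ≤ ((‖z‖ + ‖w‖) / (1 + ‖z‖ * ‖w‖)) ^ 2 :=
    calc ‖mobius z w‖ ^ 2
        = 1 - (1 - ‖z‖ ^ 2) * (1 - ‖w‖ ^ 2) / ‖1 - conj z * w‖ ^ 2 := norm_mobius_sq hz hw
      _ ≤ 1 - (1 - ‖z‖ ^ 2) * (1 - ‖w‖ ^ 2) / (1 + ‖z‖ * ‖w‖) ^ 2 := by gcongr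
      _ = ((‖z‖ + ‖w‖) / (1 + ‖z‖ * ‖w‖)) ^ 2 := by field_simp; ring
  exact (sq_le_sq₀ (norm_nonneg _) (by positivity)).mp hsq

lemma mobius_zero_right (a : ℂ) : mobius a 0 = a := by simp [mobius]

lemma mobius_self (a : ℂ) : mobius a a = 0 := by simp [mobius]

lemma mobius_mobius (ha : ‖a‖ < 1) (hz : ‖z‖ < 1) : mobius a (mobius a z) = z := by
  have h₁ := one_sub_conj_mul_ne_zero ha hz
  have h₂ := one_sub_conj_mul_ne_zero ha ha
  have hden : 1 - conj a * mobius a z = (1 - conj a * a) / (1 - conj a * z) := by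
    rw [mobius]; field_simp; ring
  have hnum : a - mobius a z = z * ((1 - conj a * a) / (1 - conj a * z)) := by
    rw [mobius, mul_div_assoc', eq_div_iff h₁, sub_mul, div_mul_cancel₀ _ h₁]; ring
  rw [mobius, hden, hnum, mul_div_cancel_right₀ _ (div_ne_zero h₂ h₁)]

lemma norm_mobius_comm (z w : ℂ) : ‖mobius z w‖ = ‖mobius w z‖ := by
  have h : 1 - conj w * z = conj (1 - conj z * w) := by simp [mul_comm]
  rw [mobius, mobius, norm_div, norm_div, h, RCLike.norm_conj, norm_sub_rev]

lemma mapsTo_mobius (ha : ‖a‖ < 1) : MapsTo (mobius a) (ball 0 1) (ball 0 1) := fun z hz ↦ by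
  rw [mem_ball_zero_iff] at hz ⊢
  exact norm_mobius_lt_one ha hz

lemma differentiableOn_mobius (ha : ‖a‖ < 1) : DifferentiableOn ℂ (mobius a) (ball 0 1) :=
  fun _ hz ↦ ((differentiableAt_const a).sub differentiableAt_id).div
    ((differentiableAt_const 1).sub ((differentiableAt_const _).mul differentiableAt_id))
    (one_sub_conj_mul_ne_zero ha (mem_ball_zero_iff.mp hz)) |>.differentiableWithinAt

/-- The Schwarz–Pick lemma. -/
theorem norm_mobius_le_of_mapsTo_ball {f : ℂ → ℂ} (hf : DifferentiableOn ℂ f (ball 0 1))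
    (hmaps : MapsTo f (ball 0 1) (ball 0 1)) (hz : ‖z‖ < 1) (hw : ‖w‖ < 1) :
    ‖mobius (f z) (f w)‖ ≤ ‖mobius z w‖ := by
  have hfz : ‖f z‖ < 1 := mem_ball_zero_iff.mp (hmaps (mem_ball_zero_iff.mpr hz))
  -- `g` fixes `0` and sends `mobius z w` to `mobius (f z) (f w)`: apply the Schwarz lemma to it.
  set g := mobius (f z) ∘ f ∘ mobius z
  have hg : DifferentiableOn ℂ g (ball 0 1) :=
    (differentiableOn_mobius hfz).comp (hf.comp (differentiableOn_mobius hz) (mapsTo_mobius hz))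
      (hmaps.comp (mapsTo_mobius hz))
  have hg_maps : MapsTo g (ball 0 1) (ball 0 1) :=
    (mapsTo_mobius hfz).comp (hmaps.comp (mapsTo_mobius hz))
  have hg0 : g 0 = 0 := by simp [g, mobius_zero_right, mobius_self]
  have := Complex.norm_le_norm_of_mapsTo_ball hg (hg_maps.mono_right ball_subset_closedBall) hg0
    (norm_mobius_lt_one hz hw)
  simpa [g, mobius_mobius hz hw] using this

lemma norm_mobius_mobius_mobius (ha : ‖a‖ < 1) (hz : ‖z‖ < 1) (hw : ‖w‖ < 1) :
    ‖mobius (mobius a z) (mobius a w)‖ = ‖mobius z w‖ := by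
  refine le_antisymm (norm_mobius_le_of_mapsTo_ball (differentiableOn_mobius ha)
    (mapsTo_mobius ha) hz hw) ?_
  have := norm_mobius_le_of_mapsTo_ball (differentiableOn_mobius ha) (mapsTo_mobius ha)
    (norm_mobius_lt_one ha hz) (norm_mobius_lt_one ha hw)
  rwa [mobius_mobius ha hz, mobius_mobius ha hw] at this

end Mobius

section Poincare

variable {a b c z w : ℂ}

lemma poincare_eq_artanh (hz : z ∈ ball 0 1) (hw : w ∈ ball 0 1) :
    poincare z w = Real.artanh ‖mobius z w‖ := by
  have h := norm_mobius_lt_one (mem_ball_zero_iff.mp hz) (mem_ball_zero_iff.mp hw)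
  rw [Real.artanh_eq_half_log ⟨by linarith [norm_nonneg (mobius z w)], h.le⟩]
  rfl

theorem poincare_le_of_mapsTo_ball {f : ℂ → ℂ} (hf : DifferentiableOn ℂ f (ball 0 1))
    (hmaps : MapsTo f (ball 0 1) (ball 0 1)) (hz : z ∈ ball 0 1) (hw : w ∈ ball 0 1) :
    poincare (f z) (f w) ≤ poincare z w := by
  rw [poincare_eq_artanh (hmaps hz) (hmaps hw), poincare_eq_artanh hz hw]
  rw [mem_ball_zero_iff] at hz hw
  exact Real.artanh_le_artanh (by linarith [norm_nonneg (mobius (f z) (f w))])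
    (norm_mobius_lt_one hz hw) (norm_mobius_le_of_mapsTo_ball hf hmaps hz hw)

theorem poincare_triangle (ha : a ∈ ball 0 1) (hb : b ∈ ball 0 1) (hc : c ∈ ball 0 1) :
    poincare a c ≤ poincare a b + poincare b c := by
  rw [poincare_eq_artanh ha hc, poincare_eq_artanh ha hb, poincare_eq_artanh hb hc,
    norm_mobius_comm a b]
  rw [mem_ball_zero_iff] at ha hb hc
  set p := ‖mobius b a‖
  set q := ‖mobius b c‖
  have hp : p ∈ Ioo (-1) 1 := ⟨by linarith [norm_nonneg (mobius b a)], norm_mobius_lt_one hb ha⟩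
  have hq : q ∈ Ioo (-1) 1 := ⟨by linarith [norm_nonneg (mobius b c)], norm_mobius_lt_one hb hc⟩
  have hac : ‖mobius a c‖ ≤ (p + q) / (1 + p * q) := by
    rw [← norm_mobius_mobius_mobius hb ha hc]
    exact norm_mobius_le (norm_mobius_lt_one hb ha) (norm_mobius_lt_one hb hc)
  have hlt : (p + q) / (1 + p * q) < 1 := by
    have : 0 ≤ p * q := mul_nonneg (norm_nonneg _) (norm_nonneg _)
    rw [div_lt_one (by linarith)]
    nlinarith [hp.2, hq.2]
  calc Real.artanh ‖mobius a c‖ ≤ Real.artanh ((p + q) / (1 + p * q)) :=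
        Real.artanh_le_artanh (by linarith [norm_nonneg (mobius a c)]) hlt hac
    _ = Real.artanh p + Real.artanh q := Real.artanh_add_div hp hq

lemma ofReal_tanh_mem_ball (x : ℝ) : (Real.tanh x : ℂ) ∈ ball 0 1 := by
  rw [mem_ball_zero_iff, norm_real, Real.norm_eq_abs, abs_lt]
  exact Real.tanh_mem_Ioo x

lemma poincare_ofReal_tanh {u v : ℝ} (h : v ≤ u) :
    poincare (Real.tanh u : ℂ) (Real.tanh v : ℂ) = u - v := by
  set ρ := (Real.tanh u + Real.tanh (-v)) / (1 + Real.tanh u * Real.tanh (-v))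
  have hρ : 0 ≤ ρ := by
    obtain ⟨hu₁, hu₂⟩ := Real.tanh_mem_Ioo u
    obtain ⟨hv₁, hv₂⟩ := Real.tanh_mem_Ioo (-v)
    refine div_nonneg ?_ (by nlinarith [mul_pos (sub_pos.mpr hu₂) (sub_pos.mpr hv₂)])
    rw [Real.tanh_neg]
    linarith [Real.tanh_le_tanh h]
  have hmobius : mobius (Real.tanh u : ℂ) (Real.tanh v : ℂ) = ρ := by
    rw [mobius, conj_ofReal]
    simp only [ρ, Real.tanh_neg]
    push_cast
    ring
  rw [poincare_eq_artanh (ofReal_tanh_mem_ball u) (ofReal_tanh_mem_ball v), hmobius, norm_real,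
    Real.norm_of_nonneg hρ, Real.artanh_add_div (Real.tanh_mem_Ioo u) (Real.tanh_mem_Ioo (-v)),
    Real.artanh_tanh, Real.artanh_tanh, sub_eq_add_neg]

end Poincare

lemma norm_sub_one_div_add_one_lt_one {E : ℂ} (hE : 0 < E.re) : ‖(E - 1) / (E + 1)‖ < 1 := by
  have hden : E + 1 ≠ 0 := fun h ↦ by
    rw [eq_neg_of_add_eq_zero_left h] at hE; norm_num at hE
  rw [norm_div, div_lt_one (norm_pos_iff.mpr hden), ← sq_lt_sq₀ (norm_nonneg _) (norm_nonneg _),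
    Complex.sq_norm, Complex.sq_norm]
  simp only [normSq_apply, sub_re, sub_im, add_re, add_im, one_re, one_im]
  nlinarith

lemma re_one_add_div_one_sub_pos {w : ℂ} (hw : ‖w‖ < 1) : 0 < ((1 + w) / (1 - w)).re := by
  have hne : 1 - w ≠ 0 := fun h ↦ by simp [← sub_eq_zero.mp h] at hw
  have hw2 : normSq w < 1 := by
    rw [← Complex.sq_norm]; nlinarith [norm_nonneg w]
  have hnum : (1 + w).re * (1 - w).re + (1 + w).im * (1 - w).im = 1 - normSq w := by
    simp only [add_re, add_im, sub_re, sub_im, one_re, one_im, normSq_apply]; ring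
  rw [div_re, ← add_div, hnum]
  exact div_pos (by linarith) (normSq_pos.mpr hne)

section Strip

variable {r : ℝ}

/-- A conformal map of the unit disc onto the strip `|Re z| < r`, sending the real diameter
onto the imaginary axis. -/
noncomputable def discToStrip (r : ℝ) (w : ℂ) : ℂ := I * (2 * r / π) * log ((1 + w) / (1 - w))

/-- The inverse of `discToStrip r`: `z ↦ tanh (-π i z / (4 r))`. -/
noncomputable def stripToDisc (r : ℝ) (z : ℂ) : ℂ :=
  (exp ((π / (2 * r) : ℝ) * -(I * z)) - 1) / (exp ((π / (2 * r) : ℝ) * -(I * z)) + 1)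

lemma abs_re_discToStrip_lt (hr : 0 < r) {w : ℂ} (hw : ‖w‖ < 1) : |(discToStrip r w).re| < r := by
  have harg : |arg ((1 + w) / (1 - w))| < π / 2 :=
    abs_arg_lt_pi_div_two_iff.mpr (Or.inl (re_one_add_div_one_sub_pos hw))
  have hre : (discToStrip r w).re = -(2 * r / π) * arg ((1 + w) / (1 - w)) := by
    rw [discToStrip, show I * (2 * r / π) * log ((1 + w) / (1 - w)) =
      ((2 * r / π : ℝ) : ℂ) * (I * log ((1 + w) / (1 - w))) by push_cast; ring,
      re_ofReal_mul, I_mul_re, log_im, mul_neg, neg_mul]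
  rw [hre, abs_mul, abs_neg, abs_of_pos (by positivity)]
  calc 2 * r / π * |arg ((1 + w) / (1 - w))| < 2 * r / π * (π / 2) := by gcongr
    _ = r := by field_simp

lemma differentiableOn_discToStrip (r : ℝ) : DifferentiableOn ℂ (discToStrip r) (ball 0 1) := by
  intro w hw
  have hw : ‖w‖ < 1 := mem_ball_zero_iff.mp hw
  have hne : 1 - w ≠ 0 := fun h ↦ by simp [← sub_eq_zero.mp h] at hw
  have hlog : DifferentiableAt ℂ log ((1 + w) / (1 - w)) :=
    differentiableAt_log (mem_slitPlane_iff.mpr (Or.inl (re_one_add_div_one_sub_pos hw)))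
  exact ((hlog.comp w (((differentiableAt_const 1).add differentiableAt_id).div
    ((differentiableAt_const 1).sub differentiableAt_id) hne)).const_mul _).differentiableWithinAt

lemma discToStrip_tanh (hr : r ≠ 0) (s : ℝ) :
    discToStrip r (Real.tanh (π * s / (4 * r))) = I * s := by
  have hratio : (1 + (Real.tanh (π * s / (4 * r)) : ℂ)) / (1 - Real.tanh (π * s / (4 * r))) =
      (Real.exp (π * s / (2 * r)) : ℂ) := by
    rw [show π * s / (2 * r) = 2 * (π * s / (4 * r)) by ring,
      ← Real.one_add_tanh_div_one_sub_tanh]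
    push_cast
    rfl
  have hr' : (r : ℂ) ≠ 0 := ofReal_ne_zero.mpr hr
  rw [discToStrip, hratio, ← ofReal_log (Real.exp_pos _).le, Real.log_exp]
  push_cast
  field_simp

lemma re_exp_neg_I_mul_pos (hr : 0 < r) {z : ℂ} (hz : |z.re| < r) :
    0 < (exp ((π / (2 * r) : ℝ) * -(I * z))).re := by
  have him : (((π / (2 * r) : ℝ) : ℂ) * -(I * z)).im = -(π / (2 * r) * z.re) := by
    rw [im_ofReal_mul, neg_im, I_mul_im, mul_neg]
  rw [exp_re, him, Real.cos_neg]
  refine mul_pos (Real.exp_pos _) (Real.cos_pos_of_mem_Ioo ⟨?_, ?_⟩)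
  all_goals
    rw [abs_lt] at hz
    have : π / (2 * r) * r = π / 2 := by field_simp
    nlinarith [div_pos Real.pi_pos (mul_pos two_pos hr)]

lemma stripToDisc_mem_ball (hr : 0 < r) {z : ℂ} (hz : |z.re| < r) : stripToDisc r z ∈ ball 0 1 :=
  mem_ball_zero_iff.mpr (norm_sub_one_div_add_one_lt_one (re_exp_neg_I_mul_pos hr hz))

lemma differentiableAt_stripToDisc (hr : 0 < r) {z : ℂ} (hz : |z.re| < r) :
    DifferentiableAt ℂ (stripToDisc r) z := by
  have hexp : DifferentiableAt ℂ (fun z ↦ exp ((π / (2 * r) : ℝ) * -(I * z))) z := by fun_prop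
  have hne : exp ((π / (2 * r) : ℝ) * -(I * z)) + 1 ≠ 0 := fun h ↦ by
    have := re_exp_neg_I_mul_pos hr hz
    rw [eq_neg_of_add_eq_zero_left h] at this; norm_num at this
  exact (hexp.sub_const 1).div (hexp.add_const 1) hne

lemma stripToDisc_I_mul (hr : r ≠ 0) (s : ℝ) :
    stripToDisc r (I * s) = Real.tanh (π * s / (4 * r)) := by
  have harg : ((π / (2 * r) : ℝ) : ℂ) * -(I * (I * s)) = ((2 * (π * s / (4 * r)) : ℝ) : ℂ) := by
    rw [← mul_assoc, I_mul_I, neg_one_mul, neg_neg, ← ofReal_mul]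
    congr 1
    field_simp
    ring
  rw [stripToDisc, harg, ← ofReal_exp, Real.tanh_eq_exp_two_mul]
  push_cast
  rfl

end Strip

section HolomorphicInverse

variable {f : ℂ → ℂ} {U : Set ℂ}

lemma Set.InjOn.not_eventually_eq (hinj : InjOn f U) {x : ℂ} (hU : U ∈ 𝓝 x) :
    ¬∀ᶠ y in 𝓝 x, f y = f x := fun h ↦ by
  have : ∀ᶠ y in 𝓝[≠] x, False := by
    filter_upwards [nhdsWithin_le_nhds (h.and hU), self_mem_nhdsWithin] with y hy hne
    exact hne (hinj hy.2 (mem_of_mem_nhds hU) hy.1)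
  exact this.exists.elim fun _ ↦ id

lemma isOpen_image_of_injOn (hU : IsOpen U) (hf : DifferentiableOn ℂ f U) (hinj : InjOn f U) :
    IsOpen (f '' U) := by
  rw [isOpen_iff_mem_nhds]
  rintro _ ⟨x, hx, rfl⟩
  rcases ((hf.analyticOnNhd hU) x hx).eventually_constant_or_nhds_le_map_nhds with h | h
  · exact absurd h (hinj.not_eventually_eq (hU.mem_nhds hx))
  · exact h (image_mem_map (hU.mem_nhds hx))

lemma continuousOn_invFunOn_image (hU : IsOpen U) (hf : DifferentiableOn ℂ f U)
    (hinj : InjOn f U) : ContinuousOn (Function.invFunOn f U) (f '' U) := by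
  rintro _ ⟨u, hu, rfl⟩
  refine ContinuousAt.continuousWithinAt ?_
  rw [ContinuousAt, hinj.leftInvOn_invFunOn hu]
  refine (nhds_basis_opens u).tendsto_right_iff.mpr fun W ⟨huW, hW⟩ ↦ ?_
  have hopen : IsOpen (f '' (W ∩ U)) := isOpen_image_of_injOn (hW.inter hU)
    (hf.mono inter_subset_right) (hinj.mono inter_subset_right)
  filter_upwards [hopen.mem_nhds ⟨u, ⟨huW, hu⟩, rfl⟩]
  rintro _ ⟨x, ⟨hxW, hxU⟩, rfl⟩
  rwa [hinj.leftInvOn_invFunOn hxU]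

lemma eventually_deriv_ne_zero_of_injOn (hU : IsOpen U) (hf : DifferentiableOn ℂ f U)
    (hinj : InjOn f U) {u : ℂ} (hu : u ∈ U) : ∀ᶠ z in 𝓝[≠] u, deriv f z ≠ 0 := by
  refine ((hf.analyticOnNhd hU) u hu).deriv.eventually_eq_zero_or_eventually_ne_zero.resolve_left
    fun hzero ↦ hinj.not_eventually_eq (hU.mem_nhds hu) ?_
  obtain ⟨ε, hε, hball⟩ := Metric.eventually_nhds_iff_ball.mp (hzero.and (hU.mem_nhds hu))
  filter_upwards [ball_mem_nhds u hε] with z hz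
  exact isOpen_ball.is_const_of_deriv_eq_zero (convex_ball u ε).isPreconnected
    (hf.mono fun z hz ↦ (hball z hz).2) (fun z hz ↦ (hball z hz).1) hz (mem_ball_self hε)

/-- At critical points of `f` the inverse is still continuous, so the singularity there is
removable. -/
theorem differentiableOn_invFunOn_image (hU : IsOpen U) (hf : DifferentiableOn ℂ f U)
    (hinj : InjOn f U) : DifferentiableOn ℂ (Function.invFunOn f U) (f '' U) := by
  set g := Function.invFunOn f U
  have hV : IsOpen (f '' U) := isOpen_image_of_injOn hU hf hinj
  have hcont : ∀ v ∈ f '' U, ContinuousAt g v := fun v hv ↦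
    (continuousOn_invFunOn_image hU hf hinj).continuousAt (hV.mem_nhds hv)
  have hgU : MapsTo g (f '' U) U := surjOn_image f U |>.mapsTo_invFunOn
  have hfg : ∀ v ∈ f '' U, f (g v) = v := fun v hv ↦ (surjOn_image f U).rightInvOn_invFunOn hv
  have hregular : ∀ v ∈ f '' U, deriv f (g v) ≠ 0 → DifferentiableAt ℂ g v := fun v hv hd ↦
    (HasDerivAt.of_local_left_inverse (hcont v hv)
      (hf.differentiableAt (hU.mem_nhds (hgU hv))).hasDerivAt hd
      (eventually_of_mem (hV.mem_nhds hv) hfg)).differentiableAt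
  intro v hv
  have hg_ne : ∀ᶠ y in 𝓝[≠] v, g y ∈ ({g v}ᶜ : Set ℂ) := by
    filter_upwards [nhdsWithin_le_nhds (hV.mem_nhds hv), self_mem_nhdsWithin] with y hy hne heq
    exact hne (by rw [← hfg y hy, mem_singleton_iff.mp heq, hfg v hv, mem_singleton_iff])
  have hg_tendsto : Tendsto g (𝓝[≠] v) (𝓝[≠] (g v)) :=
    tendsto_nhdsWithin_of_tendsto_nhds_of_eventually_within g
      ((hcont v hv).tendsto.mono_left nhdsWithin_le_nhds) hg_ne
  have hderiv := hg_tendsto.eventually (eventually_deriv_ne_zero_of_injOn hU hf hinj (hgU hv))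
  refine (Complex.analyticAt_of_differentiable_on_punctured_nhds_of_continuousAt ?_
    (hcont v hv)).differentiableAt.differentiableWithinAt
  filter_upwards [hderiv, nhdsWithin_le_nhds (hV.mem_nhds hv)] with y hy hyV
  exact hregular y hyV hy

end HolomorphicInverse

section StripDistance

variable {r s t : ℝ} {f : ℂ → ℂ}

lemma I_mul_ofReal_mem_preimage_re_Ioo (hr : 0 < r) (s : ℝ) : I * s ∈ re ⁻¹' Ioo (-r) r := by
  simp [hr]

theorem poincare_le_of_preimage_re_Ioo_subset {Ω : Set ℂ} (hr : 0 < r)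
    (hf : DifferentiableOn ℂ f Ω) (hmaps : MapsTo f Ω (ball 0 1))
    (hΩ : re ⁻¹' Ioo (-r) r ⊆ Ω) (hts : t ≤ s) :
    poincare (f (I * s)) (f (I * t)) ≤ π / (4 * r) * (s - t) := by
  have hG : MapsTo (discToStrip r) (ball 0 1) Ω := fun w hw ↦
    hΩ (abs_lt.mp (abs_re_discToStrip_lt hr (mem_ball_zero_iff.mp hw)))
  have := poincare_le_of_mapsTo_ball (hf.comp (differentiableOn_discToStrip r) hG)
    (hmaps.comp hG) (ofReal_tanh_mem_ball (π * s / (4 * r)))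
    (ofReal_tanh_mem_ball (π * t / (4 * r)))
  rw [Function.comp_apply, Function.comp_apply, discToStrip_tanh hr.ne', discToStrip_tanh hr.ne',
    poincare_ofReal_tanh (by gcongr)] at this
  convert this using 1
  ring

theorem le_poincare_of_bijOn_preimage_re_Ioo (hr : 0 < r)
    (hf : DifferentiableOn ℂ f (re ⁻¹' Ioo (-r) r)) (hbij : BijOn f (re ⁻¹' Ioo (-r) r) (ball 0 1))
    (hts : t ≤ s) : π / (4 * r) * (s - t) ≤ poincare (f (I * s)) (f (I * t)) := by
  set g := Function.invFunOn f (re ⁻¹' Ioo (-r) r)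
  have hstrip : IsOpen (re ⁻¹' Ioo (-r) r) := isOpen_Ioo.preimage continuous_re
  have hg : DifferentiableOn ℂ g (ball 0 1) :=
    hbij.image_eq ▸ differentiableOn_invFunOn_image hstrip hf hbij.injOn
  have hg_maps : MapsTo g (ball 0 1) (re ⁻¹' Ioo (-r) r) := hbij.surjOn.mapsTo_invFunOn
  have hq : DifferentiableOn ℂ (stripToDisc r ∘ g) (ball 0 1) := fun w hw ↦
    (differentiableAt_stripToDisc hr (abs_lt.mpr (hg_maps hw))).comp_differentiableWithinAt w
      (hg w hw)
  have hq_maps : MapsTo (stripToDisc r ∘ g) (ball 0 1) (ball 0 1) := fun w hw ↦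
    stripToDisc_mem_ball hr (abs_lt.mpr (hg_maps hw))
  have hq_I_mul (x : ℝ) : (stripToDisc r ∘ g) (f (I * x)) = Real.tanh (π * x / (4 * r)) := by
    rw [Function.comp_apply, show g (f (I * x)) = I * x from
      hbij.injOn.leftInvOn_invFunOn (I_mul_ofReal_mem_preimage_re_Ioo hr x),
      stripToDisc_I_mul hr.ne']
  have := poincare_le_of_mapsTo_ball hq hq_maps
    (hbij.mapsTo (I_mul_ofReal_mem_preimage_re_Ioo hr s))
    (hbij.mapsTo (I_mul_ofReal_mem_preimage_re_Ioo hr t))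
  rw [hq_I_mul, hq_I_mul, poincare_ofReal_tanh (by gcongr)] at this
  convert this using 1
  ring

end StripDistance

lemma preimage_re_Ioo_subset_Dslit (y : ℕ → ℝ) (k : ℕ) :
    re ⁻¹' Ioo (-(1 + 1 / (k + 1 : ℝ))) (1 + 1 / (k + 1 : ℝ)) ⊆ Dslit y k := by
  rintro z ⟨hz₁, hz₂⟩ ⟨hz | hz, -⟩ <;> linarith

lemma preimage_re_Ioo_subset_iInter_Dslit (y : ℕ → ℝ) : re ⁻¹' Ioo (-1) 1 ⊆ ⋂ k, Dslit y k := by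
  refine fun z hz ↦ mem_iInter.mpr fun k ↦ preimage_re_Ioo_subset_Dslit y k ?_
  have : (0 : ℝ) < 1 / (k + 1) := by positivity
  exact ⟨by linarith [hz.1], by linarith [hz.2]⟩

lemma poincare_sub_one_le_of_le_mul_Dslit {F G : ℂ → ℂ} {y : ℕ → ℝ} {k : ℕ} {s : ℝ}
    (hG : DifferentiableOn ℂ G (Dslit y k)) (hG_maps : MapsTo G (Dslit y k) (ball 0 1))
    (hFG : poincare (F (I * s)) (F (I * (s - 1 : ℝ))) ≤
      (1 + 1 / (2 * (k + 1 : ℝ))) * poincare (G (I * s)) (G (I * (s - 1 : ℝ)))) :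
    poincare (F (I * s)) (F (I * (s - 1 : ℝ))) ≤ π / 4 - π / 8 * (1 / (k + 2)) := by
  have hG_lip := poincare_le_of_preimage_re_Ioo_subset (by positivity) hG hG_maps
    (preimage_re_Ioo_subset_Dslit y k) (show s - 1 ≤ s by linarith)
  calc _ ≤ (1 + 1 / (2 * (k + 1 : ℝ))) * (π / (4 * (1 + 1 / (k + 1))) * (s - (s - 1))) :=
        hFG.trans (by gcongr)
    _ = π / 4 - π / 8 * (1 / (k + 2)) := by field_simp; ring

lemma poincare_le_sub_sum_of_steps {F : ℂ → ℂ} {c : ℝ} {a ε : ℕ → ℝ}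
    (hF : ∀ s : ℝ, F (I * s) ∈ ball 0 1)
    (hlip : ∀ s t : ℝ, t ≤ s → poincare (F (I * s)) (F (I * t)) ≤ c * (s - t))
    (ha0 : a 0 ≤ 0) (hgap : ∀ m, a (m + 1) ≤ a m - 1)
    (hstep : ∀ m, poincare (F (I * a m)) (F (I * (a m - 1 : ℝ))) ≤ c - ε m) (m : ℕ) :
    poincare (F 0) (F (I * a m)) ≤ c * (0 - a m) - ∑ j ∈ Finset.range m, ε j := by
  have hF0 : F 0 = F (I * (0 : ℝ)) := by simp
  rw [hF0]
  induction m with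
  | zero => simpa using hlip 0 (a 0) ha0
  | succ m ih =>
    have hlast := hlip (a m - 1) (a (m + 1)) (hgap m)
    have htri₁ := poincare_triangle (hF 0) (hF (a m)) (hF (a (m + 1)))
    have htri₂ := poincare_triangle (hF (a m)) (hF (a m - 1)) (hF (a (m + 1)))
    rw [Finset.sum_range_succ]
    linarith [hstep m]

lemma tendsto_sum_range_one_div_add_two :
    Tendsto (fun m : ℕ ↦ ∑ j ∈ Finset.range m, (1 : ℝ) / (j + 2)) atTop atTop := by
  have hshift (m : ℕ) : ∑ j ∈ Finset.range m, (1 : ℝ) / (j + 2) =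
      ∑ j ∈ Finset.range (m + 1), (1 : ℝ) / (j + 1) - 1 := by
    rw [Finset.sum_range_succ']
    push_cast
    ring_nf
  simp_rw [hshift]
  exact tendsto_atTop_add_const_right _ _
    (Real.tendsto_sum_range_one_div_nat_succ_atTop.comp (tendsto_add_atTop_nat 1))

lemma limsup_coe_eq_top_of_le_comp {g : ℝ → ℝ} {x b : ℕ → ℝ} (hx : Tendsto x atTop atTop)
    (hb : Tendsto b atTop atTop) (hbg : ∀ m, b m ≤ g (x m)) :
    limsup (fun t ↦ (g t : EReal)) atTop = ⊤ := by
  refine EReal.eq_top_iff_forall_lt _ |>.mpr fun c ↦ ?_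
  have hfreq : ∃ᶠ t in atTop, ((c + 1 : ℝ) : EReal) ≤ g t := by
    refine frequently_atTop.mpr fun T ↦ ?_
    obtain ⟨m, hxm, hbm⟩ := ((hx.eventually_ge_atTop T).and (hb.eventually_ge_atTop (c + 1))).exists
    exact ⟨x m, hxm, EReal.coe_le_coe_iff.mpr (hbm.trans (hbg m))⟩
  exact (EReal.coe_lt_coe_iff.mpr (lt_add_one c)).trans_le (le_limsup_of_frequently_le' hfreq)

theorem non_regular_premodel_divergence_general (y : ℕ → ℝ)
    (α : ℕ → ℝ) (hα : StrictAnti α) (hαlim : Tendsto α atTop atBot)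
    (hαgap : ∀ k : ℕ, α (k + 1) + 1 ≤ α k) (hα0 : α 0 ≤ -(1/2))
    -- Riemann maps of `S`, of `D = ⋂ k, Dslit y k`, and of each `Dslit y k`
    (hS : ℂ → ℂ) (hSholo : DifferentiableOn ℂ hS {z : ℂ | -1 < z.re ∧ z.re < 1})
    (hSbij : Set.BijOn hS {z : ℂ | -1 < z.re ∧ z.re < 1} (Metric.ball (0:ℂ) 1))
    (hD : ℂ → ℂ) (hDholo : DifferentiableOn ℂ hD (⋂ k, Dslit y k))
    (hDbij : Set.BijOn hD (⋂ k, Dslit y k) (Metric.ball (0:ℂ) 1))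
    (hK : ℕ → ℂ → ℂ) (hKholo : ∀ k, DifferentiableOn ℂ (hK k) (Dslit y k))
    (hKbij : ∀ k, Set.BijOn (hK k) (Dslit y k) (Metric.ball (0:ℂ) 1))
    -- the key localization estimate of the construction
    (hkey : ∀ k : ℕ,
      poincare (hD (Complex.I * (α k + 1/2))) (hD (Complex.I * (α k - 1/2))) ≤
        (1 + 1 / (2 * (k + 1 : ℝ))) *
          poincare (hK k (Complex.I * (α k + 1/2))) (hK k (Complex.I * (α k - 1/2)))) :
    (∀ m : ℕ,
      Real.pi / 8 * ∑ j ∈ Finset.range m, (1 : ℝ) / (j + 2) ≤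
        poincare (hS 0) (hS (Complex.I * (α m + 1/2))) -
          poincare (hD 0) (hD (Complex.I * (α m + 1/2)))) ∧
    limsup (fun t : ℝ =>
        ((poincare (hS 0) (hS (-(Complex.I * t))) -
          poincare (hD 0) (hD (-(Complex.I * t))) : ℝ) : EReal)) atTop = ⊤ := by
  set a : ℕ → ℝ := fun m ↦ α m + 1 / 2
  have hI_add (m : ℕ) : I * (α m + 1 / 2) = I * a m := by push_cast [a]; rfl
  have hI_sub (m : ℕ) : I * (α m - 1 / 2) = I * (a m - 1 : ℝ) := by push_cast [a]; ring
  have ha_nonpos (m : ℕ) : a m ≤ 0 := by simp only [a]; linarith [hα.antitone (Nat.zero_le m)]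
  have hD_mem (s : ℝ) : hD (I * s) ∈ ball 0 1 := hDbij.mapsTo
    (preimage_re_Ioo_subset_iInter_Dslit y (I_mul_ofReal_mem_preimage_re_Ioo one_pos s))
  have hD_lip (s t : ℝ) (hts : t ≤ s) : poincare (hD (I * s)) (hD (I * t)) ≤ π / 4 * (s - t) := by
    simpa using poincare_le_of_preimage_re_Ioo_subset one_pos hDholo hDbij.mapsTo
      (preimage_re_Ioo_subset_iInter_Dslit y) hts
  have hstep (k : ℕ) :
      poincare (hD (I * a k)) (hD (I * (a k - 1 : ℝ))) ≤ π / 4 - π / 8 * (1 / (k + 2)) :=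
    poincare_sub_one_le_of_le_mul_Dslit (hKholo k) (hKbij k).mapsTo (hI_add k ▸ hI_sub k ▸ hkey k)
  have hbound (m : ℕ) : π / 8 * ∑ j ∈ Finset.range m, (1 : ℝ) / (j + 2) ≤
      poincare (hS 0) (hS (I * a m)) - poincare (hD 0) (hD (I * a m)) := by
    have hS_lb := le_poincare_of_bijOn_preimage_re_Ioo one_pos hSholo hSbij (ha_nonpos m)
    have hD_ub := poincare_le_sub_sum_of_steps hD_mem hD_lip (ha_nonpos 0)
      (fun m ↦ by linarith [hαgap m]) hstep m
    rw [← Finset.mul_sum] at hD_ub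
    simp only [ofReal_zero, mul_zero] at hS_lb
    linarith
  refine ⟨fun m ↦ hI_add m ▸ hbound m, limsup_coe_eq_top_of_le_comp (x := fun m ↦ -a m)
    (tendsto_neg_atBot_atTop.comp (tendsto_atBot_add_const_right _ _ hαlim))
    (tendsto_sum_range_one_div_add_two.const_mul_atTop (by positivity : 0 < π / 8)) fun m ↦ ?_⟩
  simpa only [ofReal_neg, mul_neg, neg_neg] using hbound m

/-- in the non-regular pre-model example, with `S = {-1 < Re z < 1}`,
`D = ⋂_k D_k`, and a strictly decreasing sequence `α_k → -∞` (with `α_{k+1} ≤ α_k - 1`,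
`α_0 ≤ -1/2`) such that
`k_D(i(α_k+1/2), i(α_k-1/2)) ≤ (1 + 1/(2k))·k_{D_k}(i(α_k+1/2), i(α_k-1/2))`,
one gets `k_S(0, i(α_k+1/2)) - k_D(0, i(α_k+1/2)) ≥ (π/8)·∑_{j=1}^{k-1} 1/(1+j)`,
hence `limsup_{t→+∞} [k_S(0,-it) - k_D(0,-it)] = +∞`. Hyperbolic distances of the
domains are transported from the disc via Riemann maps. -/
theorem non_regular_premodel_divergence (y : ℕ → ℝ)
    (hy : StrictAnti y) (hylim : Tendsto y atTop atBot)
    (α : ℕ → ℝ) (hα : StrictAnti α) (hαlim : Tendsto α atTop atBot)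
    (hαgap : ∀ k : ℕ, α (k + 1) + 1 ≤ α k) (hα0 : α 0 ≤ -(1/2))
    -- Riemann maps of `S`, of `D = ⋂ k, Dslit y k`, and of each `Dslit y k`
    (hS : ℂ → ℂ) (hSholo : DifferentiableOn ℂ hS {z : ℂ | -1 < z.re ∧ z.re < 1})
    (hSbij : Set.BijOn hS {z : ℂ | -1 < z.re ∧ z.re < 1} (Metric.ball (0:ℂ) 1))
    (hD : ℂ → ℂ) (hDholo : DifferentiableOn ℂ hD (⋂ k, Dslit y k))
    (hDbij : Set.BijOn hD (⋂ k, Dslit y k) (Metric.ball (0:ℂ) 1))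
    (hK : ℕ → ℂ → ℂ) (hKholo : ∀ k, DifferentiableOn ℂ (hK k) (Dslit y k))
    (hKbij : ∀ k, Set.BijOn (hK k) (Dslit y k) (Metric.ball (0:ℂ) 1))
    -- the key localization estimate of the construction
    (hkey : ∀ k : ℕ,
      poincare (hD (Complex.I * (α k + 1/2))) (hD (Complex.I * (α k - 1/2))) ≤
        (1 + 1 / (2 * (k + 1 : ℝ))) *
          poincare (hK k (Complex.I * (α k + 1/2))) (hK k (Complex.I * (α k - 1/2)))) :
    (∀ m : ℕ,
      Real.pi / 8 * ∑ j ∈ Finset.range m, (1 : ℝ) / (j + 2) ≤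
        poincare (hS 0) (hS (Complex.I * (α m + 1/2))) -
          poincare (hD 0) (hD (Complex.I * (α m + 1/2)))) ∧
    limsup (fun t : ℝ =>
        ((poincare (hS 0) (hS (-(Complex.I * t))) -
          poincare (hD 0) (hD (-(Complex.I * t))) : ℝ) : EReal)) atTop = ⊤ :=
  non_regular_premodel_divergence_general y α hα hαlim hαgap hα0 hS hSholo hSbij hD hDholo hDbij hK
    hKholo hKbij hkey
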